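/- The number of 3×3 matrices with nonnegative integer entries such that every row sum and every column sum equals t is 3*C(t+3, 4) + C(t+2, 2), where C denotes the binomial coefficient. -/

import Mathlib

/-!
The six 3×3 permutation matrices are the three cyclic shifts (circulants) and the three
reflections (anticirculants), and every semimagic square with line sum `t` is a nonnegative
integer combination of them with total weight `t`. Both triples sum to the all-ones matrix, so the
combination is unique exactly up to trading one triple for the other, and it becomes unique once
some reflection coefficient is required to vanish. Stars and bars counts these coefficient
vectors as `C(t+5,5) - C(t+2,5)`, which Pascal's rule turns into `3 C(t+3,4) + C(t+2,2)`.
-/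

open Finset

section StarsAndBars

variable {α : Type*} [Fintype α]

lemma finite_setOf_sum_eq (n : ℕ) : {P : α → ℕ | ∑ i, P i = n}.Finite := by
  classical
  exact Set.finite_coe_iff.mp (Finite.of_equiv _ (Sym.equivNatSumOfFintype α n))

lemma ncard_setOf_sum_eq (n : ℕ) :
    {P : α → ℕ | ∑ i, P i = n}.ncard = (Fintype.card α + n - 1).choose n := by
  classical
  rw [← Nat.card_coe_set_eq, Set.coe_ofPred, ← Nat.card_congr (Sym.equivNatSumOfFintype α n),
    Nat.card_eq_fintype_card, Sym.card_sym_eq_choose]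

lemma setOf_sum_eq_and_one_le_eq_empty {s : Finset α} {n : ℕ} (h : n < #s) :
    {P : α → ℕ | ∑ i, P i = n ∧ ∀ i ∈ s, 1 ≤ P i} = ∅ := by
  refine Set.eq_empty_of_forall_notMem fun P ⟨hsum, hpos⟩ => h.not_ge ?_
  calc #s ≤ ∑ i ∈ s, P i := by simpa using s.card_nsmul_le_sum P 1 hpos
    _ ≤ ∑ i, P i := sum_le_univ_sum_of_nonneg (fun _ => Nat.zero_le _)
    _ = n := hsum

variable [DecidableEq α]

lemma ncard_setOf_sum_eq_add_card_and_one_le (s : Finset α) (n : ℕ) :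
    {P : α → ℕ | ∑ i, P i = n + #s ∧ ∀ i ∈ s, 1 ≤ P i}.ncard =
      {P : α → ℕ | ∑ i, P i = n}.ncard := by
  set e : α → ℕ := fun i => if i ∈ s then 1 else 0 with he
  have sum_add_e (P : α → ℕ) : ∑ i, (P + e) i = ∑ i, P i + #s := by
    simp [he, sum_add_distrib]
  have hshift : {P : α → ℕ | ∑ i, P i = n + #s ∧ ∀ i ∈ s, 1 ≤ P i} =
      (· + e) '' {P | ∑ i, P i = n} := by
    ext P
    simp only [Set.mem_ofPred_eq, Set.mem_image]
    constructor
    · rintro ⟨hsum, hpos⟩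
      have hle : e ≤ P := fun i => by by_cases hi : i ∈ s <;> simp [he, hi, hpos]
      refine ⟨P - e, ?_, tsub_add_cancel_of_le hle⟩
      have := sum_add_e (P - e)
      rw [tsub_add_cancel_of_le hle] at this
      omega
    · rintro ⟨Q, hQ, rfl⟩
      exact ⟨by rw [sum_add_e, hQ], fun i hi => by simp [he, hi]⟩
  rw [hshift, Set.ncard_image_of_injective _ (add_left_injective e)]

-- For `s = univ` and `n = 0` the right-hand side would be `choose 0 0 = 1`.
lemma ncard_setOf_sum_eq_and_one_le {s : Finset α} (hs : #s < Fintype.card α) (n : ℕ) :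
    {P : α → ℕ | ∑ i, P i = n ∧ ∀ i ∈ s, 1 ≤ P i}.ncard =
      (Fintype.card α + n - #s - 1).choose (Fintype.card α - 1) := by
  rcases lt_or_ge n #s with h | h
  · rw [setOf_sum_eq_and_one_le_eq_empty h, Set.ncard_empty, Nat.choose_eq_zero_of_lt (by omega)]
  · obtain ⟨m, rfl⟩ := Nat.exists_eq_add_of_le' h
    rw [ncard_setOf_sum_eq_add_card_and_one_le, ncard_setOf_sum_eq,
      show Fintype.card α + (m + #s) - #s - 1 = Fintype.card α - 1 + m by omega,
      show Fintype.card α + m - 1 = Fintype.card α - 1 + m by omega, Nat.choose_symm_add]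

end StarsAndBars

lemma ncard_setOf_sum_eq_and_exists_inr_eq_zero (t : ℕ) :
    {c : Fin 3 ⊕ Fin 3 → ℕ | ∑ i, c i = t ∧ ∃ k, c (.inr k) = 0}.ncard =
      (t + 5).choose 5 - (t + 2).choose 5 := by
  have hdiff : {c : Fin 3 ⊕ Fin 3 → ℕ | ∑ i, c i = t ∧ ∃ k, c (.inr k) = 0} =
      {c | ∑ i, c i = t} \ {c | ∑ i, c i = t ∧ ∀ i ∈ univ.map .inr, 1 ≤ c i} := by
    ext c
    simp only [Set.mem_sdiff, Set.mem_ofPred_eq, forall_mem_map, mem_univ,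
      Function.Embedding.inr_apply, forall_const, Nat.one_le_iff_ne_zero, not_and, not_forall,
      not_not]
    tauto
  rw [hdiff, Set.ncard_sdiff (fun c hc => hc.1) ((finite_setOf_sum_eq t).subset fun c hc => hc.1),
    ncard_setOf_sum_eq, ncard_setOf_sum_eq_and_one_le (by simp)]
  simp only [Fintype.card_sum, Fintype.card_fin, card_map, card_univ]
  rw [show 3 + 3 + t - 1 = 5 + t by omega, show 3 + 3 + t - 3 - 1 = t + 2 by omega,
    show 3 + 3 - 1 = 5 from rfl, ← Nat.choose_symm_add, add_comm 5]

lemma choose_add_five_five (t : ℕ) :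
    (t + 5).choose 5 = 3 * (t + 3).choose 4 + (t + 2).choose 2 + (t + 2).choose 5 := by
  have : (t + 5).choose 5 = (t + 4).choose 4 + (t + 4).choose 5 := Nat.choose_succ_succ _ _
  have : (t + 4).choose 5 = (t + 3).choose 4 + (t + 3).choose 5 := Nat.choose_succ_succ _ _
  have : (t + 3).choose 5 = (t + 2).choose 4 + (t + 2).choose 5 := Nat.choose_succ_succ _ _
  have : (t + 4).choose 4 = (t + 3).choose 3 + (t + 3).choose 4 := Nat.choose_succ_succ _ _
  have : (t + 3).choose 3 = (t + 2).choose 2 + (t + 2).choose 3 := Nat.choose_succ_succ _ _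
  have : (t + 3).choose 4 = (t + 2).choose 3 + (t + 2).choose 4 := Nat.choose_succ_succ _ _
  omega

namespace Matrix

variable {m n α : Type*}

def anticirculant [Add n] (v : n → α) : Matrix n n α :=
  of fun i j => v (i + j)

@[simp]
lemma anticirculant_apply [Add n] (v : n → α) (i j : n) : anticirculant v i j = v (i + j) := rfl

def IsSemimagic [Fintype m] [Fintype n] [AddCommMonoid α] (M : Matrix m n α) (t : α) : Prop :=
  (∀ i, ∑ j, M i j = t) ∧ (∀ j, ∑ i, M i j = t)

section Semimagic

variable [Fintype m] [Fintype n] [AddCommMonoid α]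

lemma IsSemimagic.add {M N : Matrix m n α} {s t : α} (hM : M.IsSemimagic s)
    (hN : N.IsSemimagic t) : (M + N).IsSemimagic (s + t) :=
  ⟨fun i => by simp [sum_add_distrib, hM.1 i, hN.1 i],
    fun j => by simp [sum_add_distrib, hM.2 j, hN.2 j]⟩

variable [AddCommGroup n]

lemma isSemimagic_circulant (v : n → α) : (circulant v).IsSemimagic (∑ k, v k) :=
  ⟨fun i => Equiv.sum_comp (Equiv.subLeft i) v, fun j => Equiv.sum_comp (Equiv.subRight j) v⟩

lemma isSemimagic_anticirculant (v : n → α) : (anticirculant v).IsSemimagic (∑ k, v k) :=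
  ⟨fun i => Equiv.sum_comp (Equiv.addLeft i) v, fun j => Equiv.sum_comp (Equiv.addRight j) v⟩

/-- `circulant (Pi.single k 1)` and `anticirculant (Pi.single k 1)` are the permutation matrices of
the rotations and reflections of `n`; for `n = Fin 3` these are all six permutation matrices. -/
def dihedralCombination (c : n ⊕ n → α) : Matrix n n α :=
  circulant (c ∘ Sum.inl) + anticirculant (c ∘ Sum.inr)

lemma isSemimagic_dihedralCombination (c : n ⊕ n → α) :
    (dihedralCombination c).IsSemimagic (∑ i, c i) := by
  rw [Fintype.sum_sum_type]
  exact (isSemimagic_circulant _).add (isSemimagic_anticirculant _)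

end Semimagic

lemma dihedralCombination_injOn [AddCommGroup n] (hn : ∀ x y : n, ∃ i j, i - j = x ∧ i + j = y) :
    Set.InjOn (dihedralCombination (n := n) (α := ℕ)) {c | ∃ k, c (.inr k) = 0} := by
  rintro c ⟨k, hk⟩ c' ⟨k', hk'⟩ h
  have hxy (x y : n) : c (.inl x) + c (.inr y) = c' (.inl x) + c' (.inr y) := by
    obtain ⟨i, j, rfl, rfl⟩ := hn x y
    exact congrFun (congrFun h i) j
  -- so `c - c'` is some `d` on rotations and `-d` on reflections, and the two zeros force `d = 0`
  have hk₀ : c' (.inr k) = 0 := by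
    have := hxy 0 k; have := hxy 0 k'; omega
  funext z
  rcases z with x | y
  · have := hxy x k; omega
  · have := hxy 0 y; have := hxy 0 k; omega

lemma exists_dihedralCombination_eq {M : Matrix (Fin 3) (Fin 3) ℕ} {t : ℕ}
    (hM : M.IsSemimagic t) : ∃ c, (∃ k, c (.inr k) = 0) ∧ dihedralCombination c = M := by
  -- The diagonal reads `M i i = a 0 + b (2 * i)`: take `a 0` to be the least diagonal entry.
  obtain ⟨k, hk⟩ : ∃ k, ∀ i, M k k ≤ M i i := Finite.exists_min fun i => M i i
  set b : Fin 3 → ℕ := fun y => M (2 * y) (2 * y) - M k k with hb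
  refine ⟨Sum.elim (fun x => M x 0 - b x) b, ⟨2 * k, ?_⟩, ?_⟩
  · have : 2 * (2 * k) = k := by fin_cases k <;> rfl
    simp [hb, this]
  · obtain ⟨hrow, hcol⟩ := hM
    have r0 := hrow 0; have r1 := hrow 1; have r2 := hrow 2
    have c0 := hcol 0; have c1 := hcol 1; have c2 := hcol 2
    simp only [Fin.sum_univ_three] at r0 r1 r2 c0 c1 c2
    have d0 := hk 0; have d1 := hk 1; have d2 := hk 2
    ext i j
    fin_cases k <;> fin_cases i <;> fin_cases j <;>
      simp only [dihedralCombination, add_apply, circulant_apply, anticirculant_apply,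
        Function.comp_apply, Sum.elim_inl, Sum.elim_inr, hb, Fin.reduceFinMk, Fin.reduceSub,
        Fin.reduceAdd, Fin.reduceMul, Fin.isValue] at d0 d1 d2 ⊢ <;> omega

lemma setOf_isSemimagic_eq_image (t : ℕ) :
    {M : Matrix (Fin 3) (Fin 3) ℕ | M.IsSemimagic t} =
      dihedralCombination '' {c | ∑ i, c i = t ∧ ∃ k, c (.inr k) = 0} := by
  ext M
  constructor
  · intro hM
    obtain ⟨c, hc, rfl⟩ := exists_dihedralCombination_eq hM
    exact ⟨c, ⟨((isSemimagic_dihedralCombination c).1 0).symm.trans (hM.1 0), hc⟩, rfl⟩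
  · rintro ⟨c, ⟨rfl, -⟩, rfl⟩
    exact isSemimagic_dihedralCombination c

end Matrix

theorem macmahon_semimagic_3x3 (t : ℕ) :
    Set.ncard {M : Matrix (Fin 3) (Fin 3) ℕ |
      (∀ i, ∑ j, M i j = t) ∧ (∀ j, ∑ i, M i j = t)} =
    3 * Nat.choose (t + 3) 4 + Nat.choose (t + 2) 2 := by
  have sub_add_surjective : ∀ x y : Fin 3, ∃ i j, i - j = x ∧ i + j = y := by decide
  change {M : Matrix (Fin 3) (Fin 3) ℕ | M.IsSemimagic t}.ncard = _
  rw [Matrix.setOf_isSemimagic_eq_image,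
    ((Matrix.dihedralCombination_injOn sub_add_surjective).mono fun _ hc => hc.2).ncard_image,
    ncard_setOf_sum_eq_and_exists_inr_eq_zero, choose_add_five_five, Nat.add_sub_cancel]
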